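/- Let w₁, ..., wₙ be positive elements of ℤ^r equipped with the lexicographic order. Then the set Σ = {a₁w₁ + ⋯ + aₙwₙ : a₁, ..., aₙ ∈ ℤ≥0} is a well-ordered subset of ℤ^r, i.e., every nonempty subset of Σ has a minimum element. -/
import Mathlib

noncomputable instance lexPiIntLinearOrder (r : ℕ) : LinearOrder (Lex (Fin r → ℤ)) :=
  haveI : WellFoundedLT (Fin r) := inferInstance
  inferInstance

theorem stmt_7 (r n : ℕ) (w : Fin n → (Fin r → ℤ))
    (hw : ∀ i, 0 < toLex (w i)) :
    ∀ T : Set (Lex (Fin r → ℤ)),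
      T ⊆ {x | ∃ a : Fin n → ℕ, x = toLex (∑ i, a i • w i)} →
      T.Nonempty → ∃ m ∈ T, ∀ x ∈ T, m ≤ x := by
  intro T hTsub hT
  set s : Set (Lex (Fin r → ℤ)) := Set.range (fun i => toLex (w i)) with hs
  have hsfin : s.Finite := Set.finite_range _
  have hpwo : (AddSubmonoid.closure s : Set (Lex (Fin r → ℤ))).IsPWO :=
    hsfin.isPWO.addSubmonoid_closure (by rintro x ⟨i, rfl⟩; exact (hw i).le)
  have hTsub' : T ⊆ (AddSubmonoid.closure s : Set (Lex (Fin r → ℤ))) := by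
    intro x hx
    obtain ⟨a, rfl⟩ := hTsub hx
    have : toLex (∑ i, a i • w i) = ∑ i, a i • toLex (w i) := rfl
    rw [this]
    exact AddSubmonoid.sum_mem _ (fun i _ =>
      AddSubmonoid.nsmul_mem _ (AddSubmonoid.subset_closure (Set.mem_range_self i)) _)
  have hwf : T.IsWF := (hpwo.mono hTsub').isWF
  exact ⟨hwf.min hT, hwf.min_mem hT, fun x hx => hwf.min_le hT hx⟩
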